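/- Let k > r ≥ 2 be integers with r prime. If ℓ_{k,r} = 0 (that is, gcd(k, #r) = r), then w_2(k;r) = rk − r + 1. -/

import Mathlib

/-- `vdwProp r k n` says: every coloring `χ` of `{1,...,n}` with colors `0,...,r-1`
admits, for some color `i < r`, a `k i`-term arithmetic progression
`a, a+d, ..., a+(k i - 1)d` (with `a ≥ 1`, `d ≥ 1`) contained in `{1,...,n}`,
all of whose elements have color `i`. -/
def vdwProp (r : ℕ) (k : ℕ → ℕ) (n : ℕ) : Prop :=
  ∀ χ : ℕ → ℕ, (∀ x, 1 ≤ x → x ≤ n → χ x < r) →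
    ∃ i < r, ∃ a, 1 ≤ a ∧ ∃ d, 1 ≤ d ∧ a + (k i - 1) * d ≤ n ∧
      ∀ t < k i, χ (a + t * d) = i

/-- The length function for `w₂(k;r) = w(k,2,2,...,2;r)`: color `0` must avoid
`k`-term APs, every other color must avoid `2`-term APs. -/
def twoColors (k : ℕ) : ℕ → ℕ := fun i => if i = 0 then k else 2

/-- `#r`: the product of all primes not exceeding `r`. -/
def primorialUpTo (r : ℕ) : ℕ := ∏ p ∈ Finset.filter Nat.Prime (Finset.range (r + 1)), p

/-- `j_{k,r} = min { j ≥ 0 : gcd(k - j, #r) = 1 }`. -/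
noncomputable def jkr (k r : ℕ) : ℕ := sInf {j : ℕ | Nat.gcd (k - j) (primorialUpTo r) = 1}

/-- `ℓ_{k,r} = min { ℓ ≥ 0 : gcd(k - ℓ, #r) = r }`. -/
noncomputable def lkr (k r : ℕ) : ℕ := sInf {l : ℕ | Nat.gcd (k - l) (primorialUpTo r) = r}

/-!
Since `gcd(k, #r) = r`, the only prime `≤ r` dividing `k` is `r`: so `r ∣ k`, and every
`0 < d < r` is coprime to `k`.

Lower bound: on `{1, …, r(k-1)}` colour `j k` with colour `j` and everything else with `0`. The
non-zero colours are used once each, and a `k`-term progression of colour `0` must have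
difference `d < r`, so it runs through all residues mod `k` and meets a multiple of `k`.

Upper bound: on `{1, …, r(k-1)+1}` the non-zero colours occupy a set `S` of at most `r - 1`
points that meets every `k` consecutive integers and some point `1 + t r` of the progression
`1, 1 + r, …, 1 + (k-1) r`. A stretch of length `L` in which `S` meets every `k` consecutive
integers holds more than `L / k - 1` points of `S`; applied to the stretches of lengths `t r` and
`(k-1-t) r` on either side of `1 + t r`, with `k = r c`, this gives `|S| ≥ r`.
-/

lemma dvd_primorialUpTo {p r : ℕ} (hp : p.Prime) (hpr : p ≤ r) : p ∣ primorialUpTo r :=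
  Finset.dvd_prod_of_mem _ (Finset.mem_filter.mpr ⟨Finset.mem_range.mpr (Nat.lt_succ_of_le hpr), hp⟩)

lemma gcd_primorialUpTo_of_lkr_eq_zero {k r : ℕ} (hrp : r.Prime) (hrk : r ≤ k)
    (hl : lkr k r = 0) : Nat.gcd k (primorialUpTo r) = r := by
  have hne : {l : ℕ | Nat.gcd (k - l) (primorialUpTo r) = r}.Nonempty :=
    ⟨k - r, by simpa [Nat.sub_sub_self hrk] using Nat.gcd_eq_left (dvd_primorialUpTo hrp le_rfl)⟩
  have hmem := Nat.sInf_mem hne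
  rw [← lkr, hl] at hmem
  simpa using hmem

lemma coprime_of_lt_of_gcd_primorialUpTo_eq {k r d : ℕ} (hrp : r.Prime)
    (hgcd : Nat.gcd k (primorialUpTo r) = r) (hd : 0 < d) (hdr : d < r) : Nat.Coprime d k := by
  refine Nat.coprime_of_dvd fun p hp hpd hpk => ?_
  have hpd' : p < r := (Nat.le_of_dvd hd hpd).trans_lt hdr
  have hpr : p ∣ r := hgcd ▸ Nat.dvd_gcd hpk (dvd_primorialUpTo hp hpd'.le)
  exact hpd'.ne ((Nat.prime_dvd_prime_iff_eq hp hrp).mp hpr)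

lemma exists_lt_dvd_add_mul {k d : ℕ} (hk : 0 < k) (hdk : Nat.Coprime d k) (a : ℕ) :
    ∃ t < k, k ∣ a + t * d := by
  have : NeZero k := ⟨hk.ne'⟩
  let u := ZMod.unitOfCoprime d hdk
  refine ⟨((-a : ZMod k) * ↑u⁻¹).val, ZMod.val_lt _, ?_⟩
  rw [← ZMod.natCast_eq_zero_iff]
  push_cast
  rw [ZMod.natCast_zmod_val, ← ZMod.coe_unitOfCoprime d hdk, mul_assoc, Units.inv_mul]
  ring

@[simp]
lemma twoColors_zero (k : ℕ) : twoColors k 0 = k := rfl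

lemma twoColors_of_ne_zero (k : ℕ) {i : ℕ} (hi : i ≠ 0) : twoColors k i = 2 := if_neg hi

def multiplesColoring (k x : ℕ) : ℕ := if k ∣ x then x / k else 0

lemma multiplesColoring_lt {k r x : ℕ} (hk : 0 < k) (hr : 0 < r) (hx : x ≤ r * (k - 1)) :
    multiplesColoring k x < r := by
  unfold multiplesColoring
  split_ifs
  · rw [Nat.div_lt_iff_lt_mul hk]
    calc x ≤ r * (k - 1) := hx
      _ < r * k := Nat.mul_lt_mul_of_pos_left (by omega) hr
  · exact hr

lemma multiplesColoring_ne_zero {k x : ℕ} (hx : 0 < x) (hkx : k ∣ x) :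
    multiplesColoring k x ≠ 0 := by
  rw [multiplesColoring, if_pos hkx]
  exact (Nat.div_pos (Nat.le_of_dvd hx hkx) (Nat.pos_of_dvd_of_pos hkx hx)).ne'

lemma eq_of_multiplesColoring_eq {k x y : ℕ} (hx : multiplesColoring k x ≠ 0)
    (hxy : multiplesColoring k x = multiplesColoring k y) : x = y := by
  unfold multiplesColoring at hx hxy
  split_ifs at hx hxy with hkx hky
  · rw [← Nat.div_mul_cancel hkx, ← Nat.div_mul_cancel hky, hxy]
  all_goals simp_all

lemma not_vdwProp_twoColors {r k n : ℕ} (hr : 0 < r) (hk : 0 < k)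
    (hcop : ∀ d, 0 < d → d < r → Nat.Coprime d k) (hn : n ≤ r * (k - 1)) :
    ¬ vdwProp r (twoColors k) n := by
  intro hvdw
  obtain ⟨i, -, a, ha, d, hd, hle, hAP⟩ :=
    hvdw (multiplesColoring k) fun x _ hx => multiplesColoring_lt hk hr (hx.trans hn)
  rcases eq_or_ne i 0 with rfl | hi
  · rw [twoColors_zero] at hle hAP
    have hdr : d < r := by
      by_contra! hrd
      have : r * (k - 1) ≤ (k - 1) * d := by rw [mul_comm]; exact Nat.mul_le_mul_left _ hrd
      omega
    obtain ⟨t, htk, hkt⟩ := exists_lt_dvd_add_mul hk (hcop d hd hdr) a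
    exact multiplesColoring_ne_zero (by omega) hkt (hAP t htk)
  · rw [twoColors_of_ne_zero k hi] at hle hAP
    have h0 := hAP 0 (by norm_num)
    have h1 := hAP 1 (by norm_num)
    have := eq_of_multiplesColoring_eq (h0 ▸ hi) (h0.trans h1.symm)
    omega

lemma lt_succ_card_mul_of_hits_windows (k L u : ℕ) (S : Finset ℕ)
    (hS : ∀ a, u < a → a + k ≤ u + L + 1 → ∃ s ∈ S, a ≤ s ∧ s < a + k) :
    L < (S.card + 1) * k := by
  induction L using Nat.strong_induction_on generalizing S u with
  | _ L ih =>
  by_cases hL : L < k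
  · exact hL.trans_le (Nat.le_mul_of_pos_left k (Nat.succ_pos _))
  obtain ⟨s, hsS, hus, hsk⟩ := hS (u + 1) (by omega) (by omega)
  have hrest : u + L - s < ((S.filter (s < ·)).card + 1) * k :=
    ih (u + L - s) (by omega) s (S.filter (s < ·)) fun a hsa hak => by
      obtain ⟨x, hxS, hax, hxa⟩ := hS a (by omega) (by omega)
      exact ⟨x, Finset.mem_filter.mpr ⟨hxS, by omega⟩, hax, hxa⟩
  have hcard : (S.filter (s < ·)).card + 1 ≤ S.card :=
    Finset.card_lt_card (Finset.filter_ssubset.mpr ⟨s, hsS, lt_irrefl s⟩)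
  calc L ≤ (u + L - s) + k := by omega
    _ < ((S.filter (s < ·)).card + 1) * k + k := by omega
    _ = ((S.filter (s < ·)).card + 1 + 1) * k := by ring
    _ ≤ (S.card + 1) * k := Nat.mul_le_mul_right k (by omega)

lemma le_card_of_hits_windows_of_mem {r k t : ℕ} {S : Finset ℕ} (hrk : r ∣ k)
    (htk : t < k) (hb : 1 + t * r ∈ S)
    (hS : ∀ a, 0 < a → a + k ≤ r * (k - 1) + 2 → ∃ s ∈ S, a ≤ s ∧ s < a + k) :
    r ≤ S.card := by
  obtain ⟨c, rfl⟩ := hrk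
  set b := 1 + t * r
  set s := r * c - 1 - t
  have hsplit : b + s * r = r * (r * c - 1) + 1 := by
    rw [show r * c - 1 = t + s by omega]
    ring
  have hbefore : t * r < ((S.filter (· < b)).card + 1) * (r * c) :=
    lt_succ_card_mul_of_hits_windows _ _ 0 _ fun a ha hak => by
      obtain ⟨x, hxS, hax, hxa⟩ := hS a ha (by omega)
      exact ⟨x, Finset.mem_filter.mpr ⟨hxS, by omega⟩, hax, hxa⟩
  have hafter : s * r < ((S.filter (b < ·)).card + 1) * (r * c) :=
    lt_succ_card_mul_of_hits_windows _ _ b _ fun a ha hak => by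
      obtain ⟨x, hxS, hax, hxa⟩ := hS a (by omega) (by omega)
      exact ⟨x, Finset.mem_filter.mpr ⟨hxS, by omega⟩, hax, hxa⟩
  have hcard : (S.filter (· < b)).card + (S.filter (b < ·)).card + 1 ≤ S.card := by
    have hsum := Finset.card_filter_add_card_filter_not (s := S) (· < b)
    have hlt : (S.filter (b < ·)).card < (S.filter (¬ · < b)).card := by
      refine Finset.card_lt_card ((Finset.ssubset_iff_of_subset ?_).mpr ⟨b, ?_, ?_⟩)
      · exact Finset.monotone_filter_right _ fun x hx => by simp only [not_lt]; omega
      · simp [hb]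
      · simp
    omega
  have ht : t < ((S.filter (· < b)).card + 1) * c :=
    Nat.lt_of_mul_lt_mul_right (a := r) (by linarith)
  have hs : s < ((S.filter (b < ·)).card + 1) * c :=
    Nat.lt_of_mul_lt_mul_right (a := r) (by linarith)
  have hts : t + s + 1 = r * c := by omega
  have : r < (S.filter (· < b)).card + (S.filter (b < ·)).card + 2 :=
    Nat.lt_of_mul_lt_mul_right (a := c) (by linarith)
  omega

lemma card_filter_ne_zero_le {r n : ℕ} {χ : ℕ → ℕ} (hχ : ∀ x, 1 ≤ x → x ≤ n → χ x < r)
    (hχS : ∀ x y, 1 ≤ x → x < y → y ≤ n → χ x = χ y → χ x = 0) :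
    ((Finset.Icc 1 n).filter (χ · ≠ 0)).card ≤ r - 1 := by
  have hmaps : Set.MapsTo χ ((Finset.Icc 1 n).filter (χ · ≠ 0)) (Finset.Ico 1 r) := fun x hx => by
    simp only [Finset.coe_filter, Finset.mem_Icc, Set.mem_ofPred_eq] at hx
    simpa [Nat.one_le_iff_ne_zero, hx.2] using hχ x hx.1.1 hx.1.2
  have hinj : Set.InjOn χ ((Finset.Icc 1 n).filter (χ · ≠ 0)) := fun x hx y hy hxy => by
    simp only [Finset.coe_filter, Finset.mem_Icc, Set.mem_ofPred_eq] at hx hy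
    by_contra hne
    rcases lt_or_gt_of_ne hne with hlt | hlt
    · exact hx.2 (hχS x y hx.1.1 hlt hy.1.2 hxy)
    · exact hy.2 (hχS y x hy.1.1 hlt hx.1.2 hxy.symm)
  simpa using Finset.card_le_card_of_injOn χ hmaps hinj

lemma vdwProp_twoColors_of_dvd {r k : ℕ} (hr : 0 < r) (hk : 0 < k) (hrk : r ∣ k) :
    vdwProp r (twoColors k) (r * (k - 1) + 1) := by
  intro χ hχ
  by_contra! hno
  set n := r * (k - 1) + 1
  set S := (Finset.Icc 1 n).filter (χ · ≠ 0)
  have hcard : S.card ≤ r - 1 := card_filter_ne_zero_le hχ fun x y hx hxy hy hχxy => by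
    by_contra hx0
    obtain ⟨t, ht, hχt⟩ := hno (χ x) (hχ x hx (by omega)) x hx (y - x) (by omega)
      (by rw [twoColors_of_ne_zero k hx0]; omega)
    rw [twoColors_of_ne_zero k hx0] at ht
    interval_cases t
    · simp at hχt
    · rw [one_mul, Nat.add_sub_cancel' hxy.le] at hχt
      exact hχt hχxy.symm
  have hwindows : ∀ a, 0 < a → a + k ≤ n + 1 → ∃ s ∈ S, a ≤ s ∧ s < a + k := by
    intro a ha hak
    obtain ⟨t, htk, hχt⟩ := hno 0 hr a ha 1 le_rfl (by rw [twoColors_zero]; omega)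
    rw [twoColors_zero] at htk
    rw [mul_one] at hχt
    refine ⟨a + t, ?_, by omega, by omega⟩
    simp only [S, Finset.mem_filter, Finset.mem_Icc]
    exact ⟨⟨by omega, by omega⟩, hχt⟩
  obtain ⟨t, htk, hχt⟩ := hno 0 hr 1 le_rfl r hr (by rw [twoColors_zero, mul_comm]; omega)
  rw [twoColors_zero] at htk
  have hb : 1 + t * r ∈ S := by
    have : t * r ≤ r * (k - 1) := by rw [mul_comm r]; exact Nat.mul_le_mul_right r (by omega)
    simp only [S, Finset.mem_filter, Finset.mem_Icc]
    exact ⟨⟨by omega, by omega⟩, hχt⟩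
  have := le_card_of_hits_windows_of_mem hrk htk hb hwindows
  omega

theorem w2_eq_of_l_eq_zero_general (k r : ℕ) (hk : r < k)
    (hrp : r.Prime) (hl : lkr k r = 0) :
    IsLeast {n : ℕ | 0 < n ∧ vdwProp r (twoColors k) n} (r * k - r + 1) := by
  have hgcd := gcd_primorialUpTo_of_lkr_eq_zero hrp hk.le hl
  have hk0 : 0 < k := hrp.pos.trans hk
  rw [← Nat.mul_sub_one]
  refine ⟨⟨Nat.succ_pos _, vdwProp_twoColors_of_dvd hrp.pos hk0 (hgcd ▸ Nat.gcd_dvd_left _ _)⟩, ?_⟩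
  rintro n ⟨-, hvdw⟩
  by_contra! hn
  exact not_vdwProp_twoColors hrp.pos hk0
    (fun _ => coprime_of_lt_of_gcd_primorialUpTo_eq hrp hgcd) (by omega) hvdw

/-- Part II(ii): if `r` is prime and `ℓ_{k,r} = 0` (i.e. `gcd(k, #r) = r`),
then `w₂(k;r) = rk - r + 1`. -/
theorem w2_eq_of_l_eq_zero (k r : ℕ) (hr : 2 ≤ r) (hk : r < k)
    (hrp : r.Prime) (hl : lkr k r = 0) :
    IsLeast {n : ℕ | 0 < n ∧ vdwProp r (twoColors k) n} (r * k - r + 1) :=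
  w2_eq_of_l_eq_zero_general k r hk hrp hl
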